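/- (Null distributions of exogeneity statistics.) Under the rank condition, suppose y = Yβ + X₁γ + σ·ε for some β ∈ ℝ^G, γ ∈ ℝ^{k₁}, real σ ≠ 0, and ε ∈ ℝ^T. Then C₁y = σ·C₁ε, yᵀΨ₀y = σ²·εᵀΨ₀ε, yᵀΛ_ly = σ²·εᵀΛ_lε for l = 1, 2, 3, 4, yᵀΨ_Ry = σ²·εᵀΨ_Rε, and yᵀΛ_Ry = σ²·εᵀΛ_Rε. Consequently, whenever the relevant denominator is nonzero, κ_l·(yᵀΨ₀y)/(yᵀΛ_ly) = κ_l·(εᵀΨ₀ε)/(εᵀΛ_lε) for l = 1, 2, 3, 4, κ_R·(yᵀΨ_Ry)/(yᵀΛ_Ry) = κ_R·(εᵀΨ_Rε)/(εᵀΛ_Rε), and T·(C₁y)ᵀ[(yᵀΛ₃y)Ω̂_IV⁻¹ − (yᵀΛ₄y)Ω̂_LS⁻¹]⁻¹(C₁y) = T·(C₁ε)ᵀ[(εᵀΛ₃ε)Ω̂_IV⁻¹ − (εᵀΛ₄ε)Ω̂_LS⁻¹]⁻¹(C₁ε): all the exogeneity statistics computed from y coincide with the same expressions evaluated at ε, and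 thus do not depend on β, γ, or σ. -/

import Mathlib

/-!
Under the null hypothesis the signal `y - σε = Yβ + X₁γ` lies in the column space of
`Ȳ = [Y, X₁]`. Every matrix entering the statistics (`C₁`, `Ψ₀`, `Λ₁, …, Λ₄`, `Ψ_R`,
`Λ_R`) annihilates `Ȳ`, and the square ones are symmetric, so `C₁y = σC₁ε` and each
quadratic form in `y` is `σ²` times the same form in `ε`. The factor `σ²` cancels in every
ratio, and in the Hausman-type statistic it scales the weighting matrix by `σ²` and `C₁y`
by `σ`.

The annihilation is projection algebra: `col X₁ ⊆ col X` makes `P` and `M₁` commute, so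
`N₁ = M₁P` is a symmetric idempotent with `N₁M₁ = N₁`; hence `B₁Y = B₂Y = 1`,
`B₁X₁ = B₂X₁ = 0` and `C₁M₁ = C₁`. The rank condition makes every Gram matrix that gets
inverted nonsingular, in particular those of `M₁Y` and `N₁Y = M₁(PY)`, since `[A, B]` of
full column rank forces `M̄[B]A` to have full column rank.
-/

open Matrix

variable {T G k₁ k₂ : ℕ}

/-- Orthogonal projection `P̄[A] = A(AᵀA)⁻¹Aᵀ` onto the column space of `A`. -/
noncomputable def projM {n : Type*} [Fintype n] [DecidableEq n]
    (A : Matrix (Fin T) n ℝ) : Matrix (Fin T) (Fin T) ℝ :=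
  A * (Aᵀ * A)⁻¹ * Aᵀ

/-- The annihilator `M̄[A] = I - P̄[A]`. -/
noncomputable def annM {n : Type*} [Fintype n] [DecidableEq n]
    (A : Matrix (Fin T) n ℝ) : Matrix (Fin T) (Fin T) ℝ :=
  1 - projM A

noncomputable def M1 (X₁ : Matrix (Fin T) (Fin k₁) ℝ) : Matrix (Fin T) (Fin T) ℝ :=
  annM X₁

noncomputable def Pm (X₁ : Matrix (Fin T) (Fin k₁) ℝ) (X₂ : Matrix (Fin T) (Fin k₂) ℝ) :
    Matrix (Fin T) (Fin T) ℝ :=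
  projM (fromCols X₁ X₂)

noncomputable def Mm (X₁ : Matrix (Fin T) (Fin k₁) ℝ) (X₂ : Matrix (Fin T) (Fin k₂) ℝ) :
    Matrix (Fin T) (Fin T) ℝ :=
  annM (fromCols X₁ X₂)

noncomputable def N1 (X₁ : Matrix (Fin T) (Fin k₁) ℝ) (X₂ : Matrix (Fin T) (Fin k₂) ℝ) :
    Matrix (Fin T) (Fin T) ℝ :=
  M1 X₁ * Pm X₁ X₂

noncomputable def B1 (Y : Matrix (Fin T) (Fin G) ℝ) (X₁ : Matrix (Fin T) (Fin k₁) ℝ) :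
    Matrix (Fin G) (Fin T) ℝ :=
  (Yᵀ * M1 X₁ * Y)⁻¹ * (Yᵀ * M1 X₁)

noncomputable def B2 (Y : Matrix (Fin T) (Fin G) ℝ) (X₁ : Matrix (Fin T) (Fin k₁) ℝ)
    (X₂ : Matrix (Fin T) (Fin k₂) ℝ) : Matrix (Fin G) (Fin T) ℝ :=
  (Yᵀ * N1 X₁ X₂ * Y)⁻¹ * (Yᵀ * N1 X₁ X₂)

noncomputable def C1 (Y : Matrix (Fin T) (Fin G) ℝ) (X₁ : Matrix (Fin T) (Fin k₁) ℝ)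
    (X₂ : Matrix (Fin T) (Fin k₂) ℝ) : Matrix (Fin G) (Fin T) ℝ :=
  B2 Y X₁ X₂ - B1 Y X₁

/-- OLS estimator `β̂`. -/
noncomputable def betaOLS (y : Fin T → ℝ) (Y : Matrix (Fin T) (Fin G) ℝ)
    (X₁ : Matrix (Fin T) (Fin k₁) ℝ) : Fin G → ℝ :=
  B1 Y X₁ *ᵥ y

/-- 2SLS estimator `β̃`. -/
noncomputable def beta2S (y : Fin T → ℝ) (Y : Matrix (Fin T) (Fin G) ℝ)
    (X₁ : Matrix (Fin T) (Fin k₁) ℝ) (X₂ : Matrix (Fin T) (Fin k₂) ℝ) : Fin G → ℝ :=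
  B2 Y X₁ X₂ *ᵥ y

noncomputable def OmIV (Y : Matrix (Fin T) (Fin G) ℝ) (X₁ : Matrix (Fin T) (Fin k₁) ℝ)
    (X₂ : Matrix (Fin T) (Fin k₂) ℝ) : Matrix (Fin G) (Fin G) ℝ :=
  (T : ℝ)⁻¹ • (Yᵀ * N1 X₁ X₂ * Y)

noncomputable def OmLS (Y : Matrix (Fin T) (Fin G) ℝ) (X₁ : Matrix (Fin T) (Fin k₁) ℝ) :
    Matrix (Fin G) (Fin G) ℝ :=
  (T : ℝ)⁻¹ • (Yᵀ * M1 X₁ * Y)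

noncomputable def SigV (Y : Matrix (Fin T) (Fin G) ℝ) (X₁ : Matrix (Fin T) (Fin k₁) ℝ)
    (X₂ : Matrix (Fin T) (Fin k₂) ℝ) : Matrix (Fin G) (Fin G) ℝ :=
  (T : ℝ)⁻¹ • (Yᵀ * Mm X₁ X₂ * Y)

noncomputable def Dhat (Y : Matrix (Fin T) (Fin G) ℝ) (X₁ : Matrix (Fin T) (Fin k₁) ℝ)
    (X₂ : Matrix (Fin T) (Fin k₂) ℝ) : Matrix (Fin G) (Fin G) ℝ :=
  (OmIV Y X₁ X₂)⁻¹ - (OmLS Y X₁)⁻¹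

noncomputable def Psi0 (Y : Matrix (Fin T) (Fin G) ℝ) (X₁ : Matrix (Fin T) (Fin k₁) ℝ)
    (X₂ : Matrix (Fin T) (Fin k₂) ℝ) : Matrix (Fin T) (Fin T) ℝ :=
  (C1 Y X₁ X₂)ᵀ * (Dhat Y X₁ X₂)⁻¹ * C1 Y X₁ X₂

noncomputable def N2 (Y : Matrix (Fin T) (Fin G) ℝ) (X₁ : Matrix (Fin T) (Fin k₁) ℝ)
    (X₂ : Matrix (Fin T) (Fin k₂) ℝ) : Matrix (Fin T) (Fin T) ℝ :=
  1 - M1 X₁ * Y * B2 Y X₁ X₂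

noncomputable def Lam1 (Y : Matrix (Fin T) (Fin G) ℝ) (X₁ : Matrix (Fin T) (Fin k₁) ℝ)
    (X₂ : Matrix (Fin T) (Fin k₂) ℝ) : Matrix (Fin T) (Fin T) ℝ :=
  (T : ℝ)⁻¹ • (N1 X₁ X₂ * annM (N1 X₁ X₂ * Y) * N1 X₁ X₂)

noncomputable def Lam2 (Y : Matrix (Fin T) (Fin G) ℝ) (X₁ : Matrix (Fin T) (Fin k₁) ℝ)
    (X₂ : Matrix (Fin T) (Fin k₂) ℝ) : Matrix (Fin T) (Fin T) ℝ :=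
  M1 X₁ * ((T : ℝ)⁻¹ • annM (M1 X₁ * Y) - Psi0 Y X₁ X₂) * M1 X₁

noncomputable def Lam3 (Y : Matrix (Fin T) (Fin G) ℝ) (X₁ : Matrix (Fin T) (Fin k₁) ℝ)
    (X₂ : Matrix (Fin T) (Fin k₂) ℝ) : Matrix (Fin T) (Fin T) ℝ :=
  (T : ℝ)⁻¹ • (M1 X₁ * (N2 Y X₁ X₂)ᵀ * N2 Y X₁ X₂ * M1 X₁)

noncomputable def Lam4 (Y : Matrix (Fin T) (Fin G) ℝ) (X₁ : Matrix (Fin T) (Fin k₁) ℝ) :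
    Matrix (Fin T) (Fin T) ℝ :=
  (T : ℝ)⁻¹ • (M1 X₁ * annM (M1 X₁ * Y) * M1 X₁)

def Ybar (Y : Matrix (Fin T) (Fin G) ℝ) (X₁ : Matrix (Fin T) (Fin k₁) ℝ) :
    Matrix (Fin T) (Fin G ⊕ Fin k₁) ℝ :=
  fromCols Y X₁

def Zfull (Y : Matrix (Fin T) (Fin G) ℝ) (X₁ : Matrix (Fin T) (Fin k₁) ℝ)
    (X₂ : Matrix (Fin T) (Fin k₂) ℝ) : Matrix (Fin T) (Fin G ⊕ (Fin k₁ ⊕ Fin k₂)) ℝ :=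
  fromCols Y (fromCols X₁ X₂)

noncomputable def PsiR (Y : Matrix (Fin T) (Fin G) ℝ) (X₁ : Matrix (Fin T) (Fin k₁) ℝ)
    (X₂ : Matrix (Fin T) (Fin k₂) ℝ) : Matrix (Fin T) (Fin T) ℝ :=
  (T : ℝ)⁻¹ • (annM (Ybar Y X₁) - annM (Zfull Y X₁ X₂))

noncomputable def LamR (Y : Matrix (Fin T) (Fin G) ℝ) (X₁ : Matrix (Fin T) (Fin k₁) ℝ)
    (X₂ : Matrix (Fin T) (Fin k₂) ℝ) : Matrix (Fin T) (Fin T) ℝ :=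
  (T : ℝ)⁻¹ • annM (Zfull Y X₁ X₂)

/-- `σ̂² = (1/T)(y−Yβ̂)ᵀM₁(y−Yβ̂)`. -/
noncomputable def sigHat2 (y : Fin T → ℝ) (Y : Matrix (Fin T) (Fin G) ℝ)
    (X₁ : Matrix (Fin T) (Fin k₁) ℝ) : ℝ :=
  (T : ℝ)⁻¹ * ((y - Y *ᵥ betaOLS y Y X₁) ⬝ᵥ (M1 X₁ *ᵥ (y - Y *ᵥ betaOLS y Y X₁)))

/-- `σ̃² = (1/T)(y−Yβ̃)ᵀM₁(y−Yβ̃)`. -/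
noncomputable def sigTil2 (y : Fin T → ℝ) (Y : Matrix (Fin T) (Fin G) ℝ)
    (X₁ : Matrix (Fin T) (Fin k₁) ℝ) (X₂ : Matrix (Fin T) (Fin k₂) ℝ) : ℝ :=
  (T : ℝ)⁻¹ * ((y - Y *ᵥ beta2S y Y X₁ X₂) ⬝ᵥ (M1 X₁ *ᵥ (y - Y *ᵥ beta2S y Y X₁ X₂)))

/-- `σ̃₁² = (1/T)(y−Yβ̃)ᵀN₁(y−Yβ̃)`. -/
noncomputable def sigTil1sq (y : Fin T → ℝ) (Y : Matrix (Fin T) (Fin G) ℝ)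
    (X₁ : Matrix (Fin T) (Fin k₁) ℝ) (X₂ : Matrix (Fin T) (Fin k₂) ℝ) : ℝ :=
  (T : ℝ)⁻¹ * ((y - Y *ᵥ beta2S y Y X₁ X₂) ⬝ᵥ (N1 X₁ X₂ *ᵥ (y - Y *ᵥ beta2S y Y X₁ X₂)))

/-- `σ̃₂² = σ̂² − (β̃−β̂)ᵀΔ̂⁻¹(β̃−β̂)`. -/
noncomputable def sigTil2sq (y : Fin T → ℝ) (Y : Matrix (Fin T) (Fin G) ℝ)
    (X₁ : Matrix (Fin T) (Fin k₁) ℝ) (X₂ : Matrix (Fin T) (Fin k₂) ℝ) : ℝ :=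
  sigHat2 y Y X₁ -
    (beta2S y Y X₁ X₂ - betaOLS y Y X₁) ⬝ᵥ
      ((Dhat Y X₁ X₂)⁻¹ *ᵥ (beta2S y Y X₁ X₂ - betaOLS y Y X₁))

/-- The rank condition: `X₁`, `X = [X₁, X₂]`, `[Y, X]` and `[P̄[X]Y, X₁]` all have
full column rank. -/
def RankCond (Y : Matrix (Fin T) (Fin G) ℝ) (X₁ : Matrix (Fin T) (Fin k₁) ℝ)
    (X₂ : Matrix (Fin T) (Fin k₂) ℝ) : Prop :=
  X₁.rank = k₁ ∧ (fromCols X₁ X₂).rank = k₁ + k₂ ∧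
    (fromCols Y (fromCols X₁ X₂)).rank = G + (k₁ + k₂) ∧
    (fromCols (Pm X₁ X₂ * Y) X₁).rank = G + k₁

namespace Matrix

variable {R : Type*} {l m n p : Type*}

theorem mulVec_injective_of_rank_eq_card [Field R] [Fintype n] (A : Matrix m n R)
    (h : A.rank = Fintype.card n) : Function.Injective A.mulVec :=
  mulVec_injective_iff.mpr <| linearIndependent_iff_card_eq_finrank_span.mpr <| by
    rw [← h, rank_eq_finrank_span_cols]; rfl

theorem isUnit_det_transpose_mul_self [Field R] [LinearOrder R] [IsStrictOrderedRing R]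
    [Fintype m] [Fintype n] [DecidableEq n] {A : Matrix m n R} (h : Function.Injective A.mulVec) :
    IsUnit (Aᵀ * A).det := by
  rw [← isUnit_iff_isUnit_det, ← mulVec_injective_iff_isUnit]
  have hker := ker_mulVecLin_transpose_mul_self A
  rw [LinearMap.ker_eq_bot.mpr (show Function.Injective A.mulVecLin from h)] at hker
  exact LinearMap.ker_eq_bot.mp hker

theorem mul_fromCols_eq_zero_iff [Ring R] [Fintype m] {n₁ n₂ : Type*} (A : Matrix l m R)
    (B₁ : Matrix m n₁ R) (B₂ : Matrix m n₂ R) :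
    A * fromCols B₁ B₂ = 0 ↔ A * B₁ = 0 ∧ A * B₂ = 0 := by
  rw [mul_fromCols, ← fromCols_zero, fromCols_ext_iff]

theorem mulVec_injective_fromCols_of_fromCols [Ring R] {n₁ n₂ n₃ : Type*}
    [Fintype n₁] [Fintype n₂] [Fintype n₃]
    {A₁ : Matrix m n₁ R} {A₂ : Matrix m n₂ R} {A₃ : Matrix m n₃ R}
    (h : Function.Injective (fromCols A₁ (fromCols A₂ A₃)).mulVec) :
    Function.Injective (fromCols A₁ A₂).mulVec := by
  have hext : ∀ v, fromCols A₁ A₂ *ᵥ v =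
      fromCols A₁ (fromCols A₂ A₃) *ᵥ Sum.elim (v ∘ Sum.inl) (Sum.elim (v ∘ Sum.inr) 0) := by
    intro v
    simp
  intro v w hvw
  have h' : Sum.elim (v ∘ Sum.inl) (Sum.elim (v ∘ Sum.inr) (0 : n₃ → R)) =
      Sum.elim (w ∘ Sum.inl) (Sum.elim (w ∘ Sum.inr) 0) :=
    h (by rw [← hext, ← hext, hvw])
  funext i
  rcases i with i | i
  · exact congrFun h' (Sum.inl i)
  · exact congrFun h' (Sum.inr (Sum.inl i))

theorem inv_smul_of_ne_zero [Field R] [Fintype n] [DecidableEq n] {c : R} (hc : c ≠ 0)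
    (A : Matrix n n R) : (c • A)⁻¹ = c⁻¹ • A⁻¹ := by
  by_cases hA : IsUnit A.det
  · exact inv_eq_left_inv (by simp [smul_smul, hc, nonsing_inv_mul _ hA])
  · have hcA : ¬ IsUnit (c • A).det := by
      rwa [det_smul, IsUnit.mul_iff, and_iff_right (pow_ne_zero _ hc).isUnit]
    rw [nonsing_inv_apply_not_isUnit _ hA, nonsing_inv_apply_not_isUnit _ hcA, smul_zero]

theorem smul_dotProduct_inv_sq_smul_mulVec [Field R] [Fintype n] [DecidableEq n] {c : R}
    (hc : c ≠ 0) (A : Matrix n n R) (v : n → R) :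
    (c • v) ⬝ᵥ ((c ^ 2 • A)⁻¹ *ᵥ (c • v)) = v ⬝ᵥ (A⁻¹ *ᵥ v) := by
  rw [inv_smul_of_ne_zero (pow_ne_zero 2 hc)]
  simp only [smul_mulVec, mulVec_smul, smul_dotProduct, dotProduct_smul, smul_eq_mul]
  field_simp

variable [CommRing R] [Fintype m] [Fintype p]

theorem transpose_mul_mul_self_of_idempotent {E : Matrix m m R} (hE : Eᵀ = E) (hEE : E * E = E)
    (A : Matrix m n R) : (E * A)ᵀ * (E * A) = Aᵀ * E * A := by
  rw [transpose_mul, hE, Matrix.mul_assoc, ← Matrix.mul_assoc E, hEE, Matrix.mul_assoc]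

theorem mulVec_mulVec_add_smul {A : Matrix l m R} {W : Matrix m p R}
    (hA : A * W = 0) (b : p → R) (c : R) (e : m → R) :
    A *ᵥ (W *ᵥ b + c • e) = c • (A *ᵥ e) := by
  rw [mulVec_add, mulVec_mulVec, hA, zero_mulVec, zero_add, mulVec_smul]

theorem dotProduct_mulVec_mulVec_add_smul {A : Matrix m m R} {W : Matrix m p R}
    (hsymm : Aᵀ = A) (hA : A * W = 0) (b : p → R) (c : R) (e : m → R) :
    (W *ᵥ b + c • e) ⬝ᵥ (A *ᵥ (W *ᵥ b + c • e)) = c ^ 2 * (e ⬝ᵥ (A *ᵥ e)) := by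
  have hW : (W *ᵥ b) ⬝ᵥ (A *ᵥ e) = 0 := by
    rw [dotProduct_mulVec, ← hsymm, vecMul_transpose, mulVec_mulVec, hA, zero_mulVec,
      zero_dotProduct]
  rw [mulVec_mulVec_add_smul hA, add_dotProduct, dotProduct_smul, hW, smul_zero, zero_add,
    dotProduct_smul, smul_dotProduct, smul_smul, smul_eq_mul, sq]

end Matrix

section Projection

variable {n k : Type*} [Fintype n] [Fintype k] [DecidableEq k]

theorem projM_transpose (A : Matrix (Fin T) k ℝ) : (projM A)ᵀ = projM A := by
  simp only [projM, transpose_mul, transpose_transpose, transpose_nonsing_inv, Matrix.mul_assoc]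

theorem annM_transpose (A : Matrix (Fin T) k ℝ) : (annM A)ᵀ = annM A := by
  rw [annM, transpose_sub, transpose_one, projM_transpose]

theorem mul_projM_of_mul_eq {P : Matrix (Fin T) (Fin T) ℝ} {A : Matrix (Fin T) k ℝ}
    (h : P * A = A) : P * projM A = projM A := by
  simp only [projM, ← Matrix.mul_assoc, h]

theorem projM_mul_self {A : Matrix (Fin T) k ℝ} (hA : IsUnit (Aᵀ * A).det) :
    projM A * A = A := by
  rw [projM, Matrix.mul_assoc, Matrix.mul_assoc, nonsing_inv_mul _ hA, Matrix.mul_one]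

theorem annM_mul_self {A : Matrix (Fin T) k ℝ} (hA : IsUnit (Aᵀ * A).det) :
    annM A * A = 0 := by
  rw [annM, Matrix.sub_mul, Matrix.one_mul, projM_mul_self hA, sub_self]

theorem projM_mul_projM {A : Matrix (Fin T) k ℝ} (hA : IsUnit (Aᵀ * A).det) :
    projM A * projM A = projM A :=
  mul_projM_of_mul_eq (projM_mul_self hA)

theorem annM_mul_annM {A : Matrix (Fin T) k ℝ} (hA : IsUnit (Aᵀ * A).det) :
    annM A * annM A = annM A := by
  simp only [annM, Matrix.sub_mul, Matrix.mul_sub, Matrix.one_mul, Matrix.mul_one,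
    projM_mul_projM hA, sub_self, sub_zero]

theorem mulVec_injective_annM_mul {A : Matrix (Fin T) n ℝ} {B : Matrix (Fin T) k ℝ}
    (h : Function.Injective (fromCols A B).mulVec) :
    Function.Injective (annM B * A).mulVec := by
  refine (injective_iff_map_eq_zero (annM B * A).mulVecLin).mpr fun u hu => ?_
  set w := ((Bᵀ * B)⁻¹ * Bᵀ) *ᵥ (A *ᵥ u)
  have hAu : A *ᵥ u = B *ᵥ w := by
    rw [mulVecLin_apply, ← mulVec_mulVec, annM, sub_mulVec, one_mulVec, sub_eq_zero] at hu
    rw [hu]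
    simp only [w, projM, mulVec_mulVec, Matrix.mul_assoc]
  have hzero : Sum.elim u (-w) = 0 :=
    h (by rw [fromCols_mulVec_sumElim, mulVec_neg, hAu, add_neg_cancel, mulVec_zero])
  funext i
  exact congrFun hzero (Sum.inl i)

end Projection

section

variable {Y : Matrix (Fin T) (Fin G) ℝ} {X₁ : Matrix (Fin T) (Fin k₁) ℝ}
  {X₂ : Matrix (Fin T) (Fin k₂) ℝ}

theorem M1_transpose : (M1 X₁)ᵀ = M1 X₁ :=
  annM_transpose X₁

theorem Lam3_transpose : (Lam3 Y X₁ X₂)ᵀ = Lam3 Y X₁ X₂ := by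
  simp only [Lam3, transpose_smul, transpose_mul, transpose_transpose, M1_transpose,
    Matrix.mul_assoc]

theorem Lam4_transpose : (Lam4 Y X₁)ᵀ = Lam4 Y X₁ := by
  simp only [Lam4, transpose_smul, transpose_mul, annM_transpose, M1_transpose,
    Matrix.mul_assoc]

theorem PsiR_transpose : (PsiR Y X₁ X₂)ᵀ = PsiR Y X₁ X₂ := by
  simp only [PsiR, transpose_smul, transpose_sub, annM_transpose]

theorem LamR_transpose : (LamR Y X₁ X₂)ᵀ = LamR Y X₁ X₂ := by
  rw [LamR, transpose_smul, annM_transpose]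

namespace RankCond

theorem mulVec_injective_Zfull (h : RankCond Y X₁ X₂) :
    Function.Injective (Zfull Y X₁ X₂).mulVec :=
  mulVec_injective_of_rank_eq_card _ (by simpa [Zfull] using h.2.2.1)

theorem mulVec_injective_Ybar (h : RankCond Y X₁ X₂) :
    Function.Injective (Ybar Y X₁).mulVec :=
  mulVec_injective_fromCols_of_fromCols h.mulVec_injective_Zfull

theorem isUnit_det_gram_X₁ (h : RankCond Y X₁ X₂) : IsUnit (X₁ᵀ * X₁).det :=
  isUnit_det_transpose_mul_self (mulVec_injective_of_rank_eq_card _ (by simpa using h.1))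

theorem isUnit_det_gram_X (h : RankCond Y X₁ X₂) :
    IsUnit ((fromCols X₁ X₂)ᵀ * fromCols X₁ X₂).det :=
  isUnit_det_transpose_mul_self (mulVec_injective_of_rank_eq_card _ (by simpa using h.2.1))

theorem isUnit_det_gram_Zfull (h : RankCond Y X₁ X₂) :
    IsUnit ((Zfull Y X₁ X₂)ᵀ * Zfull Y X₁ X₂).det :=
  isUnit_det_transpose_mul_self h.mulVec_injective_Zfull

theorem isUnit_det_gram_Ybar (h : RankCond Y X₁ X₂) :
    IsUnit ((Ybar Y X₁)ᵀ * Ybar Y X₁).det :=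
  isUnit_det_transpose_mul_self h.mulVec_injective_Ybar

theorem M1_mul_X₁ (h : RankCond Y X₁ X₂) : M1 X₁ * X₁ = 0 :=
  annM_mul_self h.isUnit_det_gram_X₁

theorem M1_mul_M1 (h : RankCond Y X₁ X₂) : M1 X₁ * M1 X₁ = M1 X₁ :=
  annM_mul_annM h.isUnit_det_gram_X₁

theorem Pm_mul_X₁ (h : RankCond Y X₁ X₂) : Pm X₁ X₂ * X₁ = X₁ := by
  have hX := projM_mul_self h.isUnit_det_gram_X
  rw [mul_fromCols, fromCols_ext_iff] at hX
  exact hX.1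

theorem Pm_mul_M1 (h : RankCond Y X₁ X₂) : Pm X₁ X₂ * M1 X₁ = M1 X₁ * Pm X₁ X₂ := by
  have hP : Pm X₁ X₂ * projM X₁ = projM X₁ := mul_projM_of_mul_eq h.Pm_mul_X₁
  have hP' : projM X₁ * Pm X₁ X₂ = projM X₁ := by
    simpa only [transpose_mul, Pm, projM_transpose] using congrArg transpose hP
  rw [M1, annM, Matrix.mul_sub, Matrix.sub_mul, hP, hP', Matrix.mul_one, Matrix.one_mul]

theorem N1_transpose (h : RankCond Y X₁ X₂) : (N1 X₁ X₂)ᵀ = N1 X₁ X₂ := by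
  rw [N1, transpose_mul, Pm, M1, projM_transpose, annM_transpose, ← Pm, ← M1, h.Pm_mul_M1]

theorem N1_mul_M1 (h : RankCond Y X₁ X₂) : N1 X₁ X₂ * M1 X₁ = N1 X₁ X₂ := by
  rw [N1, Matrix.mul_assoc, h.Pm_mul_M1, ← Matrix.mul_assoc, h.M1_mul_M1]

theorem N1_mul_N1 (h : RankCond Y X₁ X₂) : N1 X₁ X₂ * N1 X₁ X₂ = N1 X₁ X₂ := by
  nth_rw 2 [N1]
  rw [← Matrix.mul_assoc, h.N1_mul_M1, N1, Matrix.mul_assoc, Pm,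
    projM_mul_projM h.isUnit_det_gram_X]

theorem N1_mul_X₁ (h : RankCond Y X₁ X₂) : N1 X₁ X₂ * X₁ = 0 := by
  rw [N1, Matrix.mul_assoc, h.Pm_mul_X₁, h.M1_mul_X₁]

theorem isUnit_det_gram_M1Y (h : RankCond Y X₁ X₂) :
    IsUnit ((M1 X₁ * Y)ᵀ * (M1 X₁ * Y)).det :=
  isUnit_det_transpose_mul_self (mulVec_injective_annM_mul h.mulVec_injective_Ybar)

theorem isUnit_det_gram_N1Y (h : RankCond Y X₁ X₂) :
    IsUnit ((N1 X₁ X₂ * Y)ᵀ * (N1 X₁ X₂ * Y)).det := by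
  rw [N1, Matrix.mul_assoc]
  exact isUnit_det_transpose_mul_self (mulVec_injective_annM_mul
    (mulVec_injective_of_rank_eq_card _ (by simpa using h.2.2.2)))

theorem isUnit_det_transpose_mul_M1_mul (h : RankCond Y X₁ X₂) :
    IsUnit (Yᵀ * M1 X₁ * Y).det := by
  rw [← transpose_mul_mul_self_of_idempotent M1_transpose h.M1_mul_M1]
  exact h.isUnit_det_gram_M1Y

theorem isUnit_det_transpose_mul_N1_mul (h : RankCond Y X₁ X₂) :
    IsUnit (Yᵀ * N1 X₁ X₂ * Y).det := by
  rw [← transpose_mul_mul_self_of_idempotent h.N1_transpose h.N1_mul_N1]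
  exact h.isUnit_det_gram_N1Y

theorem B1_mul_Y (h : RankCond Y X₁ X₂) : B1 Y X₁ * Y = 1 := by
  rw [B1, Matrix.mul_assoc _ (Yᵀ * M1 X₁),
    nonsing_inv_mul _ h.isUnit_det_transpose_mul_M1_mul]

theorem B2_mul_Y (h : RankCond Y X₁ X₂) : B2 Y X₁ X₂ * Y = 1 := by
  rw [B2, Matrix.mul_assoc _ (Yᵀ * N1 X₁ X₂),
    nonsing_inv_mul _ h.isUnit_det_transpose_mul_N1_mul]

theorem B1_mul_X₁ (h : RankCond Y X₁ X₂) : B1 Y X₁ * X₁ = 0 := by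
  simp only [B1, Matrix.mul_assoc, h.M1_mul_X₁, Matrix.mul_zero]

theorem B2_mul_X₁ (h : RankCond Y X₁ X₂) : B2 Y X₁ X₂ * X₁ = 0 := by
  simp only [B2, Matrix.mul_assoc, h.N1_mul_X₁, Matrix.mul_zero]

theorem B1_mul_M1 (h : RankCond Y X₁ X₂) : B1 Y X₁ * M1 X₁ = B1 Y X₁ := by
  simp only [B1, Matrix.mul_assoc, h.M1_mul_M1]

theorem B2_mul_M1 (h : RankCond Y X₁ X₂) : B2 Y X₁ X₂ * M1 X₁ = B2 Y X₁ X₂ := by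
  simp only [B2, Matrix.mul_assoc, h.N1_mul_M1]

theorem C1_mul_Ybar (h : RankCond Y X₁ X₂) : C1 Y X₁ X₂ * Ybar Y X₁ = 0 := by
  rw [Ybar, mul_fromCols_eq_zero_iff, C1, Matrix.sub_mul, Matrix.sub_mul, h.B1_mul_Y,
    h.B2_mul_Y, h.B1_mul_X₁, h.B2_mul_X₁]
  exact ⟨sub_self _, sub_self _⟩

theorem C1_mul_M1 (h : RankCond Y X₁ X₂) : C1 Y X₁ X₂ * M1 X₁ = C1 Y X₁ X₂ := by
  rw [C1, Matrix.sub_mul, h.B1_mul_M1, h.B2_mul_M1]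

theorem Dhat_transpose (h : RankCond Y X₁ X₂) : (Dhat Y X₁ X₂)ᵀ = Dhat Y X₁ X₂ := by
  simp only [Dhat, OmIV, OmLS, transpose_sub, transpose_nonsing_inv, transpose_smul,
    transpose_mul, transpose_transpose, h.N1_transpose, M1_transpose, Matrix.mul_assoc]

theorem Psi0_transpose (h : RankCond Y X₁ X₂) : (Psi0 Y X₁ X₂)ᵀ = Psi0 Y X₁ X₂ := by
  rw [Psi0, transpose_mul, transpose_mul, transpose_transpose, transpose_nonsing_inv,
    h.Dhat_transpose, Matrix.mul_assoc]

theorem Psi0_mul_Ybar (h : RankCond Y X₁ X₂) : Psi0 Y X₁ X₂ * Ybar Y X₁ = 0 := by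
  rw [Psi0, Matrix.mul_assoc, h.C1_mul_Ybar, Matrix.mul_zero]

theorem Psi0_mul_M1 (h : RankCond Y X₁ X₂) : Psi0 Y X₁ X₂ * M1 X₁ = Psi0 Y X₁ X₂ := by
  rw [Psi0, Matrix.mul_assoc, h.C1_mul_M1]

theorem N2_mul_M1_mul_Y (h : RankCond Y X₁ X₂) : N2 Y X₁ X₂ * (M1 X₁ * Y) = 0 := by
  rw [N2, Matrix.sub_mul, Matrix.one_mul, Matrix.mul_assoc, ← Matrix.mul_assoc (B2 Y X₁ X₂),
    h.B2_mul_M1, h.B2_mul_Y, Matrix.mul_one, sub_self]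

theorem annM_Zfull_mul_Ybar (h : RankCond Y X₁ X₂) :
    annM (Zfull Y X₁ X₂) * Ybar Y X₁ = 0 := by
  have hZ := annM_mul_self h.isUnit_det_gram_Zfull
  rw [Zfull, mul_fromCols_eq_zero_iff, mul_fromCols_eq_zero_iff] at hZ
  rw [Ybar, mul_fromCols_eq_zero_iff]
  exact ⟨hZ.1, hZ.2.1⟩

theorem Lam1_transpose (h : RankCond Y X₁ X₂) : (Lam1 Y X₁ X₂)ᵀ = Lam1 Y X₁ X₂ := by
  simp only [Lam1, transpose_smul, transpose_mul, annM_transpose, h.N1_transpose,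
    Matrix.mul_assoc]

theorem Lam1_mul_Ybar (h : RankCond Y X₁ X₂) : Lam1 Y X₁ X₂ * Ybar Y X₁ = 0 := by
  rw [Lam1, smul_mul, Ybar, mul_fromCols]
  simp only [Matrix.mul_assoc, annM_mul_self h.isUnit_det_gram_N1Y, h.N1_mul_X₁,
    Matrix.mul_zero, fromCols_zero, smul_zero]

theorem Lam2_transpose (h : RankCond Y X₁ X₂) : (Lam2 Y X₁ X₂)ᵀ = Lam2 Y X₁ X₂ := by
  simp only [Lam2, transpose_mul, transpose_sub, transpose_smul, annM_transpose,
    M1_transpose, h.Psi0_transpose, Matrix.mul_assoc]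

theorem Lam2_mul_Ybar (h : RankCond Y X₁ X₂) : Lam2 Y X₁ X₂ * Ybar Y X₁ = 0 := by
  obtain ⟨hPsiY, -⟩ := (mul_fromCols_eq_zero_iff _ _ _).mp h.Psi0_mul_Ybar
  rw [Lam2, Ybar, mul_fromCols_eq_zero_iff]
  constructor
  · rw [Matrix.mul_assoc, Matrix.mul_assoc, Matrix.sub_mul, smul_mul,
      annM_mul_self h.isUnit_det_gram_M1Y, ← Matrix.mul_assoc (Psi0 Y X₁ X₂), h.Psi0_mul_M1,
      hPsiY, smul_zero, sub_self, Matrix.mul_zero]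
  · rw [Matrix.mul_assoc, h.M1_mul_X₁, Matrix.mul_zero]

theorem Lam3_mul_Ybar (h : RankCond Y X₁ X₂) : Lam3 Y X₁ X₂ * Ybar Y X₁ = 0 := by
  rw [Lam3, smul_mul, Ybar, mul_fromCols]
  simp only [Matrix.mul_assoc, h.N2_mul_M1_mul_Y, h.M1_mul_X₁, Matrix.mul_zero, smul_zero,
    fromCols_zero]

theorem Lam4_mul_Ybar (h : RankCond Y X₁ X₂) : Lam4 Y X₁ * Ybar Y X₁ = 0 := by
  rw [Lam4, smul_mul, Ybar, mul_fromCols]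
  simp only [Matrix.mul_assoc, annM_mul_self h.isUnit_det_gram_M1Y, h.M1_mul_X₁,
    Matrix.mul_zero, fromCols_zero, smul_zero]

theorem PsiR_mul_Ybar (h : RankCond Y X₁ X₂) : PsiR Y X₁ X₂ * Ybar Y X₁ = 0 := by
  rw [PsiR, smul_mul, Matrix.sub_mul, annM_mul_self h.isUnit_det_gram_Ybar,
    h.annM_Zfull_mul_Ybar, sub_self, smul_zero]

theorem LamR_mul_Ybar (h : RankCond Y X₁ X₂) : LamR Y X₁ X₂ * Ybar Y X₁ = 0 := by
  rw [LamR, smul_mul, h.annM_Zfull_mul_Ybar, smul_zero]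

end RankCond

end

theorem stmt15_general {T G k₁ k₂ : ℕ}
    (y : Fin T → ℝ) (Y : Matrix (Fin T) (Fin G) ℝ)
    (X₁ : Matrix (Fin T) (Fin k₁) ℝ) (X₂ : Matrix (Fin T) (Fin k₂) ℝ)
    (hrank : RankCond Y X₁ X₂)
    (β : Fin G → ℝ) (γ : Fin k₁ → ℝ) (σ : ℝ) (hσ : σ ≠ 0) (ε : Fin T → ℝ)
    (hy : y = Y *ᵥ β + X₁ *ᵥ γ + σ • ε) :
    C1 Y X₁ X₂ *ᵥ y = σ • (C1 Y X₁ X₂ *ᵥ ε) ∧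
    y ⬝ᵥ (Psi0 Y X₁ X₂ *ᵥ y) = σ ^ 2 * (ε ⬝ᵥ (Psi0 Y X₁ X₂ *ᵥ ε)) ∧
    y ⬝ᵥ (Lam1 Y X₁ X₂ *ᵥ y) = σ ^ 2 * (ε ⬝ᵥ (Lam1 Y X₁ X₂ *ᵥ ε)) ∧
    y ⬝ᵥ (Lam2 Y X₁ X₂ *ᵥ y) = σ ^ 2 * (ε ⬝ᵥ (Lam2 Y X₁ X₂ *ᵥ ε)) ∧
    y ⬝ᵥ (Lam3 Y X₁ X₂ *ᵥ y) = σ ^ 2 * (ε ⬝ᵥ (Lam3 Y X₁ X₂ *ᵥ ε)) ∧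
    y ⬝ᵥ (Lam4 Y X₁ *ᵥ y) = σ ^ 2 * (ε ⬝ᵥ (Lam4 Y X₁ *ᵥ ε)) ∧
    y ⬝ᵥ (PsiR Y X₁ X₂ *ᵥ y) = σ ^ 2 * (ε ⬝ᵥ (PsiR Y X₁ X₂ *ᵥ ε)) ∧
    y ⬝ᵥ (LamR Y X₁ X₂ *ᵥ y) = σ ^ 2 * (ε ⬝ᵥ (LamR Y X₁ X₂ *ᵥ ε)) ∧
    (y ⬝ᵥ (Lam1 Y X₁ X₂ *ᵥ y) ≠ 0 →
      ((k₂ : ℝ) - (G : ℝ)) / (G : ℝ) *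
          (y ⬝ᵥ (Psi0 Y X₁ X₂ *ᵥ y) / (y ⬝ᵥ (Lam1 Y X₁ X₂ *ᵥ y)))
        = ((k₂ : ℝ) - (G : ℝ)) / (G : ℝ) *
            (ε ⬝ᵥ (Psi0 Y X₁ X₂ *ᵥ ε) / (ε ⬝ᵥ (Lam1 Y X₁ X₂ *ᵥ ε)))) ∧
    (y ⬝ᵥ (Lam2 Y X₁ X₂ *ᵥ y) ≠ 0 →
      ((T : ℝ) - (k₁ : ℝ) - 2 * (G : ℝ)) / (G : ℝ) *
          (y ⬝ᵥ (Psi0 Y X₁ X₂ *ᵥ y) / (y ⬝ᵥ (Lam2 Y X₁ X₂ *ᵥ y)))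
        = ((T : ℝ) - (k₁ : ℝ) - 2 * (G : ℝ)) / (G : ℝ) *
            (ε ⬝ᵥ (Psi0 Y X₁ X₂ *ᵥ ε) / (ε ⬝ᵥ (Lam2 Y X₁ X₂ *ᵥ ε)))) ∧
    (y ⬝ᵥ (Lam3 Y X₁ X₂ *ᵥ y) ≠ 0 →
      ((T : ℝ) - (k₁ : ℝ) - (G : ℝ)) *
          (y ⬝ᵥ (Psi0 Y X₁ X₂ *ᵥ y) / (y ⬝ᵥ (Lam3 Y X₁ X₂ *ᵥ y)))
        = ((T : ℝ) - (k₁ : ℝ) - (G : ℝ)) *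
            (ε ⬝ᵥ (Psi0 Y X₁ X₂ *ᵥ ε) / (ε ⬝ᵥ (Lam3 Y X₁ X₂ *ᵥ ε)))) ∧
    (y ⬝ᵥ (Lam4 Y X₁ *ᵥ y) ≠ 0 →
      ((T : ℝ) - (k₁ : ℝ) - (G : ℝ)) *
          (y ⬝ᵥ (Psi0 Y X₁ X₂ *ᵥ y) / (y ⬝ᵥ (Lam4 Y X₁ *ᵥ y)))
        = ((T : ℝ) - (k₁ : ℝ) - (G : ℝ)) *
            (ε ⬝ᵥ (Psi0 Y X₁ X₂ *ᵥ ε) / (ε ⬝ᵥ (Lam4 Y X₁ *ᵥ ε)))) ∧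
    (y ⬝ᵥ (LamR Y X₁ X₂ *ᵥ y) ≠ 0 →
      ((T : ℝ) - (k₁ : ℝ) - (k₂ : ℝ) - (G : ℝ)) / (k₂ : ℝ) *
          (y ⬝ᵥ (PsiR Y X₁ X₂ *ᵥ y) / (y ⬝ᵥ (LamR Y X₁ X₂ *ᵥ y)))
        = ((T : ℝ) - (k₁ : ℝ) - (k₂ : ℝ) - (G : ℝ)) / (k₂ : ℝ) *
            (ε ⬝ᵥ (PsiR Y X₁ X₂ *ᵥ ε) / (ε ⬝ᵥ (LamR Y X₁ X₂ *ᵥ ε)))) ∧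
    (T : ℝ) *
        ((C1 Y X₁ X₂ *ᵥ y) ⬝ᵥ
          (((y ⬝ᵥ (Lam3 Y X₁ X₂ *ᵥ y)) • (OmIV Y X₁ X₂)⁻¹ -
              (y ⬝ᵥ (Lam4 Y X₁ *ᵥ y)) • (OmLS Y X₁)⁻¹)⁻¹ *ᵥ
            (C1 Y X₁ X₂ *ᵥ y)))
      = (T : ℝ) *
          ((C1 Y X₁ X₂ *ᵥ ε) ⬝ᵥ
            (((ε ⬝ᵥ (Lam3 Y X₁ X₂ *ᵥ ε)) • (OmIV Y X₁ X₂)⁻¹ -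
                (ε ⬝ᵥ (Lam4 Y X₁ *ᵥ ε)) • (OmLS Y X₁)⁻¹)⁻¹ *ᵥ
              (C1 Y X₁ X₂ *ᵥ ε))) := by
  have hy' : y = Ybar Y X₁ *ᵥ Sum.elim β γ + σ • ε := by
    rw [hy, Ybar, fromCols_mulVec_sumElim]
  have quadForm : ∀ A : Matrix (Fin T) (Fin T) ℝ, Aᵀ = A → A * Ybar Y X₁ = 0 →
      y ⬝ᵥ (A *ᵥ y) = σ ^ 2 * (ε ⬝ᵥ (A *ᵥ ε)) := fun A hsymm hA => by
    rw [hy', dotProduct_mulVec_mulVec_add_smul hsymm hA]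
  have hC1 : C1 Y X₁ X₂ *ᵥ y = σ • (C1 Y X₁ X₂ *ᵥ ε) := by
    rw [hy', mulVec_mulVec_add_smul hrank.C1_mul_Ybar]
  have hPsi0 := quadForm _ hrank.Psi0_transpose hrank.Psi0_mul_Ybar
  have hLam1 := quadForm _ hrank.Lam1_transpose hrank.Lam1_mul_Ybar
  have hLam2 := quadForm _ hrank.Lam2_transpose hrank.Lam2_mul_Ybar
  have hLam3 := quadForm _ Lam3_transpose hrank.Lam3_mul_Ybar
  have hLam4 := quadForm _ Lam4_transpose hrank.Lam4_mul_Ybar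
  have hPsiR := quadForm _ PsiR_transpose hrank.PsiR_mul_Ybar
  have hLamR := quadForm _ LamR_transpose hrank.LamR_mul_Ybar
  have hσ2 : σ ^ 2 ≠ 0 := pow_ne_zero 2 hσ
  refine ⟨hC1, hPsi0, hLam1, hLam2, hLam3, hLam4, hPsiR, hLamR,
    fun _ => ?_, fun _ => ?_, fun _ => ?_, fun _ => ?_, fun _ => ?_, ?_⟩
  · rw [hPsi0, hLam1, mul_div_mul_left _ _ hσ2]
  · rw [hPsi0, hLam2, mul_div_mul_left _ _ hσ2]
  · rw [hPsi0, hLam3, mul_div_mul_left _ _ hσ2]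
  · rw [hPsi0, hLam4, mul_div_mul_left _ _ hσ2]
  · rw [hPsiR, hLamR, mul_div_mul_left _ _ hσ2]
  · rw [hC1, hLam3, hLam4, mul_smul, mul_smul, ← smul_sub,
      smul_dotProduct_inv_sq_smul_mulVec hσ]

/-- **Null distributions of exogeneity statistics.**  Under the rank condition, if
`y = Yβ + X₁γ + σε` with `σ ≠ 0`, then `C₁y = σC₁ε`, `yᵀΨ₀y = σ²εᵀΨ₀ε`,
`yᵀΛ_ly = σ²εᵀΛ_lε` (`l = 1,2,3,4`), `yᵀΨ_Ry = σ²εᵀΨ_Rε`, `yᵀΛ_Ry = σ²εᵀΛ_Rε`;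
consequently all DWH and RH exogeneity statistics computed from `y` coincide with the
same expressions evaluated at `ε`, and hence do not depend on `β`, `γ`, or `σ`. -/
theorem stmt15 {T G k₁ k₂ : ℕ}
    (hT : 0 < T) (hG : 0 < G) (hk₁ : 0 < k₁) (hk₂ : 0 < k₂)
    (y : Fin T → ℝ) (Y : Matrix (Fin T) (Fin G) ℝ)
    (X₁ : Matrix (Fin T) (Fin k₁) ℝ) (X₂ : Matrix (Fin T) (Fin k₂) ℝ)
    (hrank : RankCond Y X₁ X₂)
    (β : Fin G → ℝ) (γ : Fin k₁ → ℝ) (σ : ℝ) (hσ : σ ≠ 0) (ε : Fin T → ℝ)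
    (hy : y = Y *ᵥ β + X₁ *ᵥ γ + σ • ε) :
    C1 Y X₁ X₂ *ᵥ y = σ • (C1 Y X₁ X₂ *ᵥ ε) ∧
    y ⬝ᵥ (Psi0 Y X₁ X₂ *ᵥ y) = σ ^ 2 * (ε ⬝ᵥ (Psi0 Y X₁ X₂ *ᵥ ε)) ∧
    y ⬝ᵥ (Lam1 Y X₁ X₂ *ᵥ y) = σ ^ 2 * (ε ⬝ᵥ (Lam1 Y X₁ X₂ *ᵥ ε)) ∧
    y ⬝ᵥ (Lam2 Y X₁ X₂ *ᵥ y) = σ ^ 2 * (ε ⬝ᵥ (Lam2 Y X₁ X₂ *ᵥ ε)) ∧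
    y ⬝ᵥ (Lam3 Y X₁ X₂ *ᵥ y) = σ ^ 2 * (ε ⬝ᵥ (Lam3 Y X₁ X₂ *ᵥ ε)) ∧
    y ⬝ᵥ (Lam4 Y X₁ *ᵥ y) = σ ^ 2 * (ε ⬝ᵥ (Lam4 Y X₁ *ᵥ ε)) ∧
    y ⬝ᵥ (PsiR Y X₁ X₂ *ᵥ y) = σ ^ 2 * (ε ⬝ᵥ (PsiR Y X₁ X₂ *ᵥ ε)) ∧
    y ⬝ᵥ (LamR Y X₁ X₂ *ᵥ y) = σ ^ 2 * (ε ⬝ᵥ (LamR Y X₁ X₂ *ᵥ ε)) ∧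
    (y ⬝ᵥ (Lam1 Y X₁ X₂ *ᵥ y) ≠ 0 →
      ((k₂ : ℝ) - (G : ℝ)) / (G : ℝ) *
          (y ⬝ᵥ (Psi0 Y X₁ X₂ *ᵥ y) / (y ⬝ᵥ (Lam1 Y X₁ X₂ *ᵥ y)))
        = ((k₂ : ℝ) - (G : ℝ)) / (G : ℝ) *
            (ε ⬝ᵥ (Psi0 Y X₁ X₂ *ᵥ ε) / (ε ⬝ᵥ (Lam1 Y X₁ X₂ *ᵥ ε)))) ∧
    (y ⬝ᵥ (Lam2 Y X₁ X₂ *ᵥ y) ≠ 0 →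
      ((T : ℝ) - (k₁ : ℝ) - 2 * (G : ℝ)) / (G : ℝ) *
          (y ⬝ᵥ (Psi0 Y X₁ X₂ *ᵥ y) / (y ⬝ᵥ (Lam2 Y X₁ X₂ *ᵥ y)))
        = ((T : ℝ) - (k₁ : ℝ) - 2 * (G : ℝ)) / (G : ℝ) *
            (ε ⬝ᵥ (Psi0 Y X₁ X₂ *ᵥ ε) / (ε ⬝ᵥ (Lam2 Y X₁ X₂ *ᵥ ε)))) ∧
    (y ⬝ᵥ (Lam3 Y X₁ X₂ *ᵥ y) ≠ 0 →
      ((T : ℝ) - (k₁ : ℝ) - (G : ℝ)) *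
          (y ⬝ᵥ (Psi0 Y X₁ X₂ *ᵥ y) / (y ⬝ᵥ (Lam3 Y X₁ X₂ *ᵥ y)))
        = ((T : ℝ) - (k₁ : ℝ) - (G : ℝ)) *
            (ε ⬝ᵥ (Psi0 Y X₁ X₂ *ᵥ ε) / (ε ⬝ᵥ (Lam3 Y X₁ X₂ *ᵥ ε)))) ∧
    (y ⬝ᵥ (Lam4 Y X₁ *ᵥ y) ≠ 0 →
      ((T : ℝ) - (k₁ : ℝ) - (G : ℝ)) *
          (y ⬝ᵥ (Psi0 Y X₁ X₂ *ᵥ y) / (y ⬝ᵥ (Lam4 Y X₁ *ᵥ y)))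
        = ((T : ℝ) - (k₁ : ℝ) - (G : ℝ)) *
            (ε ⬝ᵥ (Psi0 Y X₁ X₂ *ᵥ ε) / (ε ⬝ᵥ (Lam4 Y X₁ *ᵥ ε)))) ∧
    (y ⬝ᵥ (LamR Y X₁ X₂ *ᵥ y) ≠ 0 →
      ((T : ℝ) - (k₁ : ℝ) - (k₂ : ℝ) - (G : ℝ)) / (k₂ : ℝ) *
          (y ⬝ᵥ (PsiR Y X₁ X₂ *ᵥ y) / (y ⬝ᵥ (LamR Y X₁ X₂ *ᵥ y)))
        = ((T : ℝ) - (k₁ : ℝ) - (k₂ : ℝ) - (G : ℝ)) / (k₂ : ℝ) *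
            (ε ⬝ᵥ (PsiR Y X₁ X₂ *ᵥ ε) / (ε ⬝ᵥ (LamR Y X₁ X₂ *ᵥ ε)))) ∧
    (T : ℝ) *
        ((C1 Y X₁ X₂ *ᵥ y) ⬝ᵥ
          (((y ⬝ᵥ (Lam3 Y X₁ X₂ *ᵥ y)) • (OmIV Y X₁ X₂)⁻¹ -
              (y ⬝ᵥ (Lam4 Y X₁ *ᵥ y)) • (OmLS Y X₁)⁻¹)⁻¹ *ᵥ
            (C1 Y X₁ X₂ *ᵥ y)))
      = (T : ℝ) *
          ((C1 Y X₁ X₂ *ᵥ ε) ⬝ᵥ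
            (((ε ⬝ᵥ (Lam3 Y X₁ X₂ *ᵥ ε)) • (OmIV Y X₁ X₂)⁻¹ -
                (ε ⬝ᵥ (Lam4 Y X₁ *ᵥ ε)) • (OmLS Y X₁)⁻¹)⁻¹ *ᵥ
              (C1 Y X₁ X₂ *ᵥ ε))) :=
  stmt15_general y Y X₁ X₂ hrank β γ σ hσ ε hy
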